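/- arXiv:2108.04241 — 3 statements merged into one kernel-verified Lean document; each statement's English description precedes it below -/
import Mathlib

section
/- For f continuous on [0,1], the Riemann–Liouville fractional integral Iᵅ f converges uniformly to the integral I¹ f(x) = ∫₀ˣ f(t) dt as α → 1. -/
/-!
Write `c = Γ(α)⁻¹`, so that `Iᵅ f x - ∫₀ˣ f = c ∫₀ˣ ((x - t)^(α-1) - 1) f t dt + (c - 1) ∫₀ˣ f`.
On `(0, 1]` the function `u ↦ u^(α-1) - 1` does not change sign, so the integral of its absolute
value over `[0, x]` is `|x^α/α - x|`; with `M = sup |f|` the error is therefore at most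
`M (|c| |x^α/α - x| + |c - 1| x)`. This bound is jointly continuous in `(α, x)` for `α > 0` and
vanishes at `α = 1`, so by compactness of `[0, 1]` it tends to `0` uniformly in `x`.
-/

open MeasureTheory Set

/-- Riemann–Liouville fractional integral of order `α` with base point `0`
    (with the convention `I⁰ = Id`). -/
noncomputable def RL (α : ℝ) (f : ℝ → ℝ) (x : ℝ) : ℝ :=
  if α = 0 then f x else (Real.Gamma α)⁻¹ * ∫ t in (0:ℝ)..x, (x - t) ^ (α - 1) * f t

open Filter Topology

theorem ContinuousOn.tendstoUniformlyOn_of_isCompact {α β γ : Type*} [UniformSpace α]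
    [LocallyCompactSpace α] [UniformSpace β] [UniformSpace γ] {F : α → β → γ} {a : α}
    {U : Set α} {K : Set β} (hU : U ∈ 𝓝 a) (hK : IsCompact K) (hF : ContinuousOn ↿F (U ×ˢ K)) :
    TendstoUniformlyOn F (F a) (𝓝 a) K := by
  obtain ⟨C, hC, hCU, hCc⟩ := LocallyCompactSpace.local_compact_nhds _ _ hU
  have hFC : UniformContinuousOn ↿F (C ×ˢ K) :=
    (hCc.prod hK).uniformContinuousOn_of_continuous (hF.mono (prod_mono hCU Subset.rfl))
  simpa only [nhdsWithin_eq_nhds.2 hC] using hFC.tendstoUniformlyOn (mem_of_mem_nhds hC)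

theorem TendstoUniformlyOn.of_dist_le {ι α β : Type*} [PseudoMetricSpace β] {p : Filter ι}
    {s : Set α} {F : ι → α → β} {f : α → β} {B : ι → α → ℝ}
    (hB : TendstoUniformlyOn B 0 p s) (hFB : ∀ᶠ i in p, ∀ x ∈ s, dist (F i x) (f x) ≤ B i x) :
    TendstoUniformlyOn F f p s := by
  rw [Metric.tendstoUniformlyOn_iff] at hB ⊢
  intro ε hε
  filter_upwards [hB ε hε, hFB] with i hBi hFi x hx
  calc dist (f x) (F i x) = dist (F i x) (f x) := dist_comm _ _
    _ ≤ B i x := hFi x hx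
    _ ≤ |B i x| := le_abs_self _
    _ < ε := by simpa using hBi x hx

theorem intervalIntegral.integral_abs_eq_abs_integral {f : ℝ → ℝ} {a b : ℝ} (hab : a ≤ b)
    (hf : (∀ x ∈ Ioc a b, 0 ≤ f x) ∨ ∀ x ∈ Ioc a b, f x ≤ 0) :
    ∫ x in a..b, |f x| = |∫ x in a..b, f x| := by
  rw [integral_of_le hab, integral_of_le hab]
  rcases hf with hf | hf
  · rw [setIntegral_congr_fun measurableSet_Ioc fun x hx => abs_of_nonneg (hf x hx),
      abs_of_nonneg (setIntegral_nonneg measurableSet_Ioc hf)]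
  · rw [setIntegral_congr_fun measurableSet_Ioc fun x hx => abs_of_nonpos (hf x hx),
      MeasureTheory.integral_neg, abs_of_nonpos (setIntegral_nonpos measurableSet_Ioc hf)]

theorem integral_rpow_sub_one {β : ℝ} (hβ : -1 < β) (x : ℝ) :
    ∫ u in (0:ℝ)..x, (u ^ β - 1) = x ^ (β + 1) / (β + 1) - x := by
  rw [intervalIntegral.integral_sub (intervalIntegral.intervalIntegrable_rpow' hβ)
    intervalIntegrable_const, integral_rpow (Or.inl hβ),
    Real.zero_rpow (by linarith), intervalIntegral.integral_const]
  simp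

theorem integral_abs_rpow_sub_one {β x : ℝ} (hβ : -1 < β) (hx0 : 0 ≤ x) (hx1 : x ≤ 1) :
    ∫ u in (0:ℝ)..x, |u ^ β - 1| = |x ^ (β + 1) / (β + 1) - x| := by
  rw [intervalIntegral.integral_abs_eq_abs_integral hx0, integral_rpow_sub_one hβ x]
  rcases le_total β 0 with hβ0 | hβ0
  · exact Or.inl fun u hu => sub_nonneg.2 <|
      Real.one_le_rpow_of_pos_of_le_one_of_nonpos hu.1 (hu.2.trans hx1) hβ0
  · exact Or.inr fun u hu => sub_nonpos.2 <| Real.rpow_le_one hu.1.le (hu.2.trans hx1) hβ0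

theorem intervalIntegrable_sub_rpow {β : ℝ} (hβ : -1 < β) (x : ℝ) :
    IntervalIntegrable (fun t => (x - t) ^ β) volume 0 x := by
  simpa using
    ((intervalIntegral.intervalIntegrable_rpow' (a := 0) (b := x) hβ).comp_sub_left x).symm

theorem integral_abs_sub_rpow_sub_one {α x : ℝ} (hα : 0 < α) (hx0 : 0 ≤ x) (hx1 : x ≤ 1) :
    ∫ t in (0:ℝ)..x, |(x - t) ^ (α - 1) - 1| = |x ^ α / α - x| := by
  rw [intervalIntegral.integral_comp_sub_left (fun u => |u ^ (α - 1) - 1|), sub_self, sub_zero,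
    integral_abs_rpow_sub_one (by linarith) hx0 hx1, sub_add_cancel]

noncomputable def rlErrorBound (M α x : ℝ) : ℝ :=
  M * (|(Real.Gamma α)⁻¹| * |x ^ α / α - x| + |(Real.Gamma α)⁻¹ - 1| * x)

theorem abs_RL_sub_integral_le {f : ℝ → ℝ} {α x M : ℝ} (hα : 0 < α) (hx0 : 0 ≤ x) (hx1 : x ≤ 1)
    (hf : ContinuousOn f (Icc 0 x)) (hM : ∀ t ∈ Icc 0 x, ‖f t‖ ≤ M) :
    |RL α f x - ∫ t in (0:ℝ)..x, f t| ≤ rlErrorBound M α x := by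
  rw [RL, if_neg hα.ne', rlErrorBound]
  set c := (Real.Gamma α)⁻¹
  have hker := intervalIntegrable_sub_rpow (show -1 < α - 1 by linarith) x
  have hfi : IntervalIntegrable f volume 0 x :=
    (hf.mono (uIcc_of_le hx0).subset).intervalIntegrable
  have hkf : IntervalIntegrable (fun t => (x - t) ^ (α - 1) * f t) volume 0 x :=
    hker.mul_continuousOn (by rwa [uIcc_of_le hx0])
  have hsplit : c * (∫ t in (0:ℝ)..x, (x - t) ^ (α - 1) * f t) - ∫ t in (0:ℝ)..x, f t =
      c * (∫ t in (0:ℝ)..x, ((x - t) ^ (α - 1) - 1) * f t) + (c - 1) * ∫ t in (0:ℝ)..x, f t := by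
    have hsub : ∫ t in (0:ℝ)..x, ((x - t) ^ (α - 1) - 1) * f t =
        (∫ t in (0:ℝ)..x, (x - t) ^ (α - 1) * f t) - ∫ t in (0:ℝ)..x, f t := by
      rw [← intervalIntegral.integral_sub hkf hfi]
      simp only [sub_mul, one_mul]
    rw [hsub]
    ring
  have hkernel : |∫ t in (0:ℝ)..x, ((x - t) ^ (α - 1) - 1) * f t| ≤ M * |x ^ α / α - x| := by
    have := intervalIntegral.norm_integral_le_of_norm_le hx0
      (f := fun t => ((x - t) ^ (α - 1) - 1) * f t) (g := fun t => |(x - t) ^ (α - 1) - 1| * M)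
      (Eventually.of_forall fun t ht => by
        rw [norm_mul, Real.norm_eq_abs]
        exact mul_le_mul_of_nonneg_left (hM t (Ioc_subset_Icc_self ht)) (abs_nonneg _))
      ((hker.sub intervalIntegrable_const).abs.mul_const M)
    rwa [intervalIntegral.integral_mul_const, integral_abs_sub_rpow_sub_one hα hx0 hx1,
      mul_comm] at this
  have hplain : |∫ t in (0:ℝ)..x, f t| ≤ M * x := by
    have := intervalIntegral.norm_integral_le_of_norm_le_const (a := 0) (b := x)
      fun t ht => hM t (Ioc_subset_Icc_self (by rwa [uIoc_of_le hx0] at ht))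
    rwa [Real.norm_eq_abs, sub_zero, abs_of_nonneg hx0] at this
  calc |c * (∫ t in (0:ℝ)..x, (x - t) ^ (α - 1) * f t) - ∫ t in (0:ℝ)..x, f t|
      ≤ |c| * |∫ t in (0:ℝ)..x, ((x - t) ^ (α - 1) - 1) * f t| +
          |c - 1| * |∫ t in (0:ℝ)..x, f t| := by
        rw [hsplit, ← abs_mul, ← abs_mul]; exact abs_add_le _ _
    _ ≤ |c| * (M * |x ^ α / α - x|) + |c - 1| * (M * x) := by gcongr
    _ = M * (|c| * |x ^ α / α - x| + |c - 1| * x) := by ring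

theorem continuousOn_rlErrorBound (M : ℝ) :
    ContinuousOn (Function.uncurry (rlErrorBound M)) (Ioi 0 ×ˢ univ) := by
  refine continuousOn_of_forall_continuousAt fun p hp => ?_
  have hp1 : 0 < p.1 := hp.1
  have hΓ : ContinuousAt (fun p : ℝ × ℝ => Real.Gamma p.1) p :=
    ((Real.differentiableAt_Gamma fun m => by
      linarith [(Nat.cast_nonneg m : (0:ℝ) ≤ m)]).continuousAt).comp continuousAt_fst
  have hΓ0 : Real.Gamma p.1 ≠ 0 := (Real.Gamma_pos_of_pos hp1).ne'
  have hpow : ContinuousAt (fun p : ℝ × ℝ => p.2 ^ p.1) p :=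
    continuousAt_snd.rpow continuousAt_fst (Or.inr hp1)
  simp only [Function.uncurry_def, rlErrorBound]
  fun_prop (disch := first | exact hΓ0 | exact hp1.ne')

theorem rlErrorBound_one (M x : ℝ) : rlErrorBound M 1 x = 0 := by
  simp [rlErrorBound, Real.Gamma_one]

/-- For continuous `f` on `[0,1]`, the Riemann–Liouville fractional integral `Iᵅ f`
    converges uniformly on `[0,1]` to `I¹ f (x) = ∫₀ˣ f` as `α → 1`. -/
theorem rl_tendsto_one_uniformly (f : ℝ → ℝ) (hf : ContinuousOn f (Icc (0:ℝ) 1)) :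
    TendstoUniformlyOn (fun (α : ℝ) (x : ℝ) => RL α f x)
      (fun x => ∫ t in (0:ℝ)..x, f t) (nhds (1:ℝ)) (Icc (0:ℝ) 1) := by
  obtain ⟨M, hM⟩ := isCompact_Icc.exists_bound_of_continuousOn hf
  have hB : TendstoUniformlyOn (rlErrorBound M) (rlErrorBound M 1) (𝓝 1) (Icc 0 1) :=
    ContinuousOn.tendstoUniformlyOn_of_isCompact (Ioi_mem_nhds one_pos) isCompact_Icc
      ((continuousOn_rlErrorBound M).mono (prod_mono subset_rfl (subset_univ _)))
  rw [funext (rlErrorBound_one M)] at hB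
  refine hB.of_dist_le ?_
  filter_upwards [Ioi_mem_nhds one_pos] with α hα x hx
  exact abs_RL_sub_integral_le hα hx.1 hx.2 (hf.mono (Icc_subset_Icc_right hx.2))
    fun t ht => hM t (Icc_subset_Icc_right hx.2 ht)
end

section
/- Let 0 < α ≤ 1 and let f be of the form f = I^{1-α} φ with φ ∈ L¹(0,1). Then the Caputo fractional derivative of the Riemann–Liouville integral of f recovers f: (D^α_C (Iᵅ f))(x) = f(x) for almost every x ∈ [0,1], where D^α_C g = I^{1-α}(g'). -/
/-!
The Beta integral `∫ₛˣ (x - t)^(a-1) (t - s)^(b-1) dt = (x - s)^(a+b-1) B(a, b)` and Fubini give the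
semigroup law `Iᵃ (Iᵇ φ) = I^(a+b) φ`. Hence `Iᵅ f = Iᵅ (I^(1-α) φ) = I¹ φ` is the primitive of `φ`
on `[0, 1]`, whose derivative is `φ` almost everywhere by the Lebesgue differentiation theorem, so
`I^(1-α) ((Iᵅ f)') = I^(1-α) φ = f` almost everywhere.
-/

open MeasureTheory Set

open ProbabilityTheory

lemma RL_zero (f : ℝ → ℝ) : RL 0 f = f := by
  ext x; rw [RL, if_pos rfl]

lemma RL_one (f : ℝ → ℝ) (x : ℝ) : RL 1 f x = ∫ t in (0:ℝ)..x, f t := by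
  simp [RL, Real.Gamma_one]

lemma RL_eq_setIntegral {β x : ℝ} (hβ : β ≠ 0) (hx : 0 ≤ x) (f : ℝ → ℝ) :
    RL β f x = (Real.Gamma β)⁻¹ * ∫ t in Ioo 0 x, (x - t) ^ (β - 1) * f t := by
  rw [RL, if_neg hβ, intervalIntegral.integral_of_le hx, integral_Ioc_eq_integral_Ioo]

lemma RL_congr {β x : ℝ} {f g : ℝ → ℝ} (hfg : EqOn f g (Icc 0 x)) (hx : 0 ≤ x) :
    RL β f x = RL β g x := by
  unfold RL
  split_ifs
  · exact hfg ⟨hx, le_rfl⟩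
  · congr 1
    refine intervalIntegral.integral_congr fun t ht => ?_
    rw [uIcc_of_le hx] at ht
    simp only [hfg ht]

lemma ae_RL_eq_of_ae_eq (β : ℝ) {c : ℝ} {f g : ℝ → ℝ}
    (hfg : f =ᵐ[volume.restrict (Ioo 0 c)] g) :
    ∀ᵐ x ∂volume.restrict (Icc 0 c), RL β f x = RL β g x := by
  by_cases hβ : β = 0
  · rw [hβ, RL_zero, RL_zero, Measure.restrict_congr_set Ioo_ae_eq_Icc.symm]
    exact hfg
  · filter_upwards [ae_restrict_mem measurableSet_Icc] with x hx
    rw [RL_eq_setIntegral hβ hx.1, RL_eq_setIntegral hβ hx.1]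
    congr 1
    refine integral_congr_ae ?_
    filter_upwards [ae_restrict_of_ae_restrict_of_subset (Ioo_subset_Ioo_right hx.2) hfg]
      with t ht
    rw [ht]

lemma setIntegral_sub_rpow_mul_rpow_sub {a b s x : ℝ} (ha : 0 < a) (hb : 0 < b)
    (hsx : s < x) :
    ∫ t in Ioo s x, (x - t) ^ (a - 1) * (t - s) ^ (b - 1) = (x - s) ^ (a + b - 1) * beta a b := by
  rw [← integral_Ioc_eq_integral_Ioo, ← intervalIntegral.integral_of_le hsx.le]
  have hc : 0 < x - s := sub_pos.2 hsx
  have hscaled := Complex.betaIntegral_scaled b a hc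
  rw [Complex.betaIntegral_eq_Gamma_mul_div _ _ (by simpa) (by simpa)] at hscaled
  have hreal : ∫ u in (0:ℝ)..(x - s), ((u ^ (b - 1) * (x - s - u) ^ (a - 1) : ℝ) : ℂ)
      = ∫ u in (0:ℝ)..(x - s),
          (u : ℂ) ^ ((b : ℂ) - 1) * (((x - s : ℝ) : ℂ) - u) ^ ((a : ℂ) - 1) := by
    refine intervalIntegral.integral_congr fun u hu => ?_
    rw [uIcc_of_le hc.le] at hu
    push_cast
    rw [Complex.ofReal_cpow hu.1, Complex.ofReal_cpow (sub_nonneg.2 hu.2)]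
    push_cast; rfl
  have hexp : (b : ℂ) + a - 1 = ((b + a - 1 : ℝ) : ℂ) := by push_cast; rfl
  rw [← hreal, intervalIntegral.integral_ofReal, hexp, ← Complex.ofReal_cpow hc.le,
    ← Complex.ofReal_add] at hscaled
  simp only [Complex.Gamma_ofReal] at hscaled
  have hbeta : ∫ u in (0:ℝ)..(x - s), u ^ (b - 1) * (x - s - u) ^ (a - 1)
      = (x - s) ^ (b + a - 1) * (Real.Gamma b * Real.Gamma a / Real.Gamma (b + a)) := by
    exact_mod_cast hscaled
  have hshift := intervalIntegral.integral_comp_sub_right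
    (fun u => u ^ (b - 1) * (x - s - u) ^ (a - 1)) s (a := s) (b := x)
  simp only [sub_self, sub_sub_sub_cancel_right] at hshift
  rw [intervalIntegral.integral_congr fun t _ => mul_comm _ _, hshift, hbeta, beta, add_comm b,
    mul_comm (Real.Gamma b)]

lemma integrableOn_sub_rpow_mul_rpow_sub {a b s x : ℝ} (ha : 0 < a) (hb : 0 < b)
    (hsx : s < x) :
    IntegrableOn (fun t => (x - t) ^ (a - 1) * (t - s) ^ (b - 1)) (Ioo s x) := by
  have hpos : 0 < (x - s) ^ (a + b - 1) * beta a b :=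
    mul_pos (Real.rpow_pos_of_pos (sub_pos.2 hsx) _) (beta_pos ha hb)
  exact .of_integral_ne_zero (setIntegral_sub_rpow_mul_rpow_sub ha hb hsx ▸ hpos.ne')

/-- `Iᵃ (Iᵇ φ) x = ∫∫_{(0,x)²} rlCompKernel a b x t s * φ s ds dt / (Γ(a) Γ(b))`. -/
noncomputable def rlCompKernel (a b x t s : ℝ) : ℝ :=
  (Ioo s x).indicator (fun t => (x - t) ^ (a - 1) * (t - s) ^ (b - 1)) t

section rlCompKernel

variable {a b x : ℝ}

lemma rlCompKernel_nonneg (t s : ℝ) : 0 ≤ rlCompKernel a b x t s :=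
  indicator_nonneg (fun _ ht => mul_nonneg (Real.rpow_nonneg (sub_nonneg.2 ht.2.le) _)
    (Real.rpow_nonneg (sub_nonneg.2 ht.1.le) _)) t

lemma measurable_uncurry_rlCompKernel : Measurable (Function.uncurry (rlCompKernel a b x)) := by
  have hS : MeasurableSet {p : ℝ × ℝ | p.2 < p.1 ∧ p.1 < x} :=
    (measurableSet_lt measurable_snd measurable_fst).inter (measurableSet_lt measurable_fst
      measurable_const)
  have : Function.uncurry (rlCompKernel a b x)
      = {p : ℝ × ℝ | p.2 < p.1 ∧ p.1 < x}.indicator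
          (fun p => (x - p.1) ^ (a - 1) * (p.1 - p.2) ^ (b - 1)) := by
    ext p
    simp only [Function.uncurry, rlCompKernel, indicator_apply, mem_Ioo, mem_ofPred_eq]
  rw [this]
  exact Measurable.indicator (by fun_prop) hS

lemma setIntegral_rlCompKernel (ha : 0 < a) (hb : 0 < b) {s : ℝ} (hs : s ∈ Ico 0 x) :
    ∫ t in Ioo 0 x, rlCompKernel a b x t s = (x - s) ^ (a + b - 1) * beta a b := by
  unfold rlCompKernel
  rw [setIntegral_indicator measurableSet_Ioo, Ioo_inter_Ioo, max_eq_right hs.1,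
    min_self, setIntegral_sub_rpow_mul_rpow_sub ha hb hs.2]

lemma integrableOn_rlCompKernel (ha : 0 < a) (hb : 0 < b) {s : ℝ} (hs : s ∈ Ico 0 x) :
    IntegrableOn (fun t => rlCompKernel a b x t s) (Ioo 0 x) := by
  unfold rlCompKernel
  rw [IntegrableOn, integrable_indicator_iff measurableSet_Ioo,
    IntegrableOn, Measure.restrict_restrict measurableSet_Ioo, Ioo_inter_Ioo, max_eq_left hs.1,
    min_self]
  exact integrableOn_sub_rpow_mul_rpow_sub ha hb hs.2

lemma integrable_rlCompKernel_mul (ha : 0 < a) (hb : 0 < b) {φ : ℝ → ℝ}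
    (hφm : AEStronglyMeasurable φ (volume.restrict (Ioo 0 x)))
    (hφ : IntegrableOn (fun s => (x - s) ^ (a + b - 1) * φ s) (Ioo 0 x)) :
    Integrable (fun p : ℝ × ℝ => rlCompKernel a b x p.1 p.2 * φ p.2)
      ((volume.restrict (Ioo 0 x)).prod (volume.restrict (Ioo 0 x))) := by
  refine (integrable_prod_iff' (f := fun p : ℝ × ℝ => rlCompKernel a b x p.1 p.2 * φ p.2)
    (measurable_uncurry_rlCompKernel.aestronglyMeasurable.mul hφm.comp_snd)).2 ⟨?_, ?_⟩
  · filter_upwards [ae_restrict_mem measurableSet_Ioo] with s hs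
    exact (integrableOn_rlCompKernel ha hb (Ioo_subset_Ico_self hs)).mul_const _
  · refine (hφ.norm.mul_const (beta a b)).congr ?_
    filter_upwards [ae_restrict_mem measurableSet_Ioo] with s hs
    simp only [norm_mul, Real.norm_of_nonneg (rlCompKernel_nonneg _ _),
      Real.norm_of_nonneg (Real.rpow_nonneg (sub_nonneg.2 hs.2.le) _), integral_mul_const,
      setIntegral_rlCompKernel ha hb (Ioo_subset_Ico_self hs)]
    ring

end rlCompKernel

theorem RL_RL {a b x : ℝ} (ha : 0 < a) (hb : 0 < b) (hx : 0 ≤ x) {φ : ℝ → ℝ}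
    (hφm : AEStronglyMeasurable φ (volume.restrict (Ioo 0 x)))
    (hφ : IntegrableOn (fun s => (x - s) ^ (a + b - 1) * φ s) (Ioo 0 x)) :
    RL a (RL b φ) x = RL (a + b) φ x := by
  have hinner : ∀ t ∈ Ioo 0 x, (x - t) ^ (a - 1) * RL b φ t
      = (Real.Gamma b)⁻¹ * ∫ s in Ioo 0 x, rlCompKernel a b x t s * φ s := by
    intro t ht
    have hIio : ∀ s, rlCompKernel a b x t s * φ s
        = (Iio t).indicator (fun s => (x - t) ^ (a - 1) * ((t - s) ^ (b - 1) * φ s)) s := by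
      intro s
      simp only [rlCompKernel, indicator_apply, mem_Ioo, mem_Iio, ht.2, and_true]
      split_ifs <;> ring
    simp only [hIio, setIntegral_indicator measurableSet_Iio, Ioo_inter_Iio, min_eq_right ht.2.le,
      integral_const_mul, RL_eq_setIntegral hb.ne' ht.1.le]
    ring
  have hΓa := (Real.Gamma_pos_of_pos ha).ne'
  have hΓb := (Real.Gamma_pos_of_pos hb).ne'
  have hΓab := (Real.Gamma_pos_of_pos (add_pos ha hb)).ne'
  calc RL a (RL b φ) x
      = (Real.Gamma a)⁻¹ * (Real.Gamma b)⁻¹ *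
          ∫ t in Ioo 0 x, ∫ s in Ioo 0 x, rlCompKernel a b x t s * φ s := by
        rw [RL_eq_setIntegral ha.ne' hx, setIntegral_congr_fun measurableSet_Ioo hinner,
          integral_const_mul, mul_assoc]
    _ = (Real.Gamma a)⁻¹ * (Real.Gamma b)⁻¹ *
          ∫ s in Ioo 0 x, ∫ t in Ioo 0 x, rlCompKernel a b x t s * φ s := by
        rw [integral_integral_swap (integrable_rlCompKernel_mul ha hb hφm hφ)]
    _ = (Real.Gamma a)⁻¹ * (Real.Gamma b)⁻¹ *
          ∫ s in Ioo 0 x, beta a b * ((x - s) ^ (a + b - 1) * φ s) := by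
        congr 1
        refine setIntegral_congr_fun measurableSet_Ioo fun s hs => ?_
        rw [integral_mul_const, setIntegral_rlCompKernel ha hb (Ioo_subset_Ico_self hs)]
        ring
    _ = RL (a + b) φ x := by
        rw [RL_eq_setIntegral (add_pos ha hb).ne' hx, integral_const_mul, beta]
        field_simp

lemma RL_RL_one_sub {α x : ℝ} (hα : 0 < α) (hα1 : α ≤ 1) (hx : 0 ≤ x) {φ : ℝ → ℝ}
    (hφ : IntegrableOn φ (Ioo 0 x)) :
    RL α (RL (1 - α) φ) x = ∫ t in (0:ℝ)..x, φ t := by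
  rcases hα1.lt_or_eq with hlt | rfl
  · rw [RL_RL hα (sub_pos.2 hlt) hx hφ.aestronglyMeasurable (by simpa using hφ),
      add_sub_cancel, RL_one]
  · rw [sub_self, RL_zero, RL_one]

/-- 1st Fundamental Theorem of FC for the Caputo derivative `D^α_C g = I^{1-α} (g')`:
    if `f ∈ X_FT = I^{1-α}(L¹(0,1))`, then `D^α_C (Iᵅ f) = f` a.e. on `[0,1]`. -/
theorem caputo_left_inverse (α : ℝ) (hα : 0 < α) (hα1 : α ≤ 1) (f φ : ℝ → ℝ)
    (hφ : IntegrableOn φ (Ioo (0:ℝ) 1))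
    (hf : ∀ x ∈ Icc (0:ℝ) 1, f x = RL (1 - α) φ x) :
    ∀ᵐ x ∂(volume.restrict (Icc (0:ℝ) 1)),
      RL (1 - α) (fun y => deriv (fun z => RL α f z) y) x = f x := by
  have hprimitive : ∀ z ∈ Icc (0:ℝ) 1, RL α f z = ∫ t in (0:ℝ)..z, φ t := fun z hz => by
    rw [RL_congr (fun t ht => hf t ⟨ht.1, ht.2.trans hz.2⟩) hz.1,
      RL_RL_one_sub hα hα1 hz.1 (hφ.mono_set (Ioo_subset_Ioo_right hz.2))]
  have hderiv : deriv (RL α f) =ᵐ[volume.restrict (Ioo 0 1)] φ := by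
    have hφi : IntervalIntegrable φ volume 0 1 :=
      (intervalIntegrable_iff_integrableOn_Ioo_of_le zero_le_one).2 hφ
    filter_upwards [ae_restrict_mem measurableSet_Ioo,
      ae_restrict_of_ae hφi.ae_hasDerivAt_integral] with y hy hFTC
    have hy' : y ∈ uIcc 0 1 := by rw [uIcc_of_le zero_le_one]; exact Ioo_subset_Icc_self hy
    refine ((hFTC hy' 0 left_mem_uIcc).congr_of_eventuallyEq ?_).deriv
    filter_upwards [Ioo_mem_nhds hy.1 hy.2] with z hz using hprimitive z (Ioo_subset_Icc_self hz)
  filter_upwards [ae_RL_eq_of_ae_eq (1 - α) hderiv, ae_restrict_mem measurableSet_Icc]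
    with x hx hx01
  rw [hx, hf x hx01]
end

section
/- Let (κ, k) be a pair of kernels satisfying the generalized Sonine condition (κ * k)(t) = t^{n-1}/(n-1)! for some n ∈ ℕ. Then for every f with f⁽ⁿ⁾ locally integrable (f n-times differentiable, appropriately regular), (I_{(κ)} (∗D_{(k)} f))(t) = f(t) - Σ_{j=0}^{n-1} f⁽ʲ⁾(0) tʲ/j! for t > 0, where ∗D_{(k)} f = dⁿ/dtⁿ (k * (f - Σ_{j=0}^{n-1} f⁽ʲ⁾(0) h_{j+1})) with h_{j+1}(t) = tʲ/j!. -/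
/-!
Write `g = f - taylorPoly f n` and `hₙ(t) = tⁿ⁻¹/(n-1)!`. Since `g⁽ʲ⁾(0) = 0` for `j < n`,
differentiating under the integral sign `n` times moves every derivative onto `g`, so that
`∗D₍ₖ₎ f = k * g⁽ⁿ⁾ = k * f⁽ⁿ⁾` on `(0, ∞)`. By Fubini on the triangle `0 < u ≤ τ ≤ t` the
Laplace convolution is associative, hence `κ * (k * f⁽ⁿ⁾) = (κ * k) * f⁽ⁿ⁾ = hₙ * f⁽ⁿ⁾`,
which is `f - taylorPoly f n` by Taylor's formula with integral remainder.
-/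

open MeasureTheory Set

/-- Laplace convolution on `(0,∞)`. -/
noncomputable def lconv (g h : ℝ → ℝ) (t : ℝ) : ℝ := ∫ τ in (0:ℝ)..t, g (t - τ) * h τ

/-- The Taylor polynomial of degree `n-1` of `f` at `0`. -/
noncomputable def taylorPoly (f : ℝ → ℝ) (n : ℕ) (t : ℝ) : ℝ :=
  ∑ j ∈ Finset.range n, iteratedDeriv j f 0 * t ^ j / (Nat.factorial j : ℝ)

open Filter Topology Asymptotics
open scoped Interval Nat

theorem lconv_comm (g h : ℝ → ℝ) (t : ℝ) : lconv g h t = lconv h g t := by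
  have hsub := intervalIntegral.integral_comp_sub_left (fun σ => g σ * h (t - σ)) t
    (a := 0) (b := t)
  simp only [sub_sub_cancel, sub_self, sub_zero] at hsub
  rw [lconv, lconv, hsub]
  exact intervalIntegral.integral_congr fun τ _ => mul_comm _ _

theorem lconv_congr_ae_right {g h₁ h₂ : ℝ → ℝ} {t : ℝ} (ht : 0 ≤ t)
    (h : h₁ =ᵐ[volume.restrict (Ioc 0 t)] h₂) : lconv g h₁ t = lconv g h₂ t := by
  refine intervalIntegral.integral_congr_ae ?_
  rw [uIoc_of_le ht, ← ae_restrict_iff' measurableSet_Ioc]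
  filter_upwards [h] with τ hτ
  rw [hτ]

theorem lconv_congr_ae_left {g₁ g₂ h : ℝ → ℝ} {t : ℝ} (ht : 0 ≤ t)
    (hg : g₁ =ᵐ[volume.restrict (Ioc 0 t)] g₂) : lconv g₁ h t = lconv g₂ h t := by
  rw [lconv_comm, lconv_congr_ae_right ht hg, lconv_comm]

theorem lconv_congr_right {g h₁ h₂ : ℝ → ℝ} {t : ℝ} (ht : 0 ≤ t) (h : EqOn h₁ h₂ (Ioc 0 t)) :
    lconv g h₁ t = lconv g h₂ t :=
  lconv_congr_ae_right ht ((ae_restrict_mem measurableSet_Ioc).mono h)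

theorem lconv_congr_left {g₁ g₂ h : ℝ → ℝ} {t : ℝ} (ht : 0 ≤ t) (hg : EqOn g₁ g₂ (Ioc 0 t)) :
    lconv g₁ h t = lconv g₂ h t :=
  lconv_congr_ae_left ht ((ae_restrict_mem measurableSet_Ioc).mono hg)

theorem integrableOn_Ioc_comp_sub_left {k : ℝ → ℝ} {τ : ℝ} (hτ : 0 ≤ τ)
    (hk : IntegrableOn k (Ioc 0 τ)) : IntegrableOn (fun u => k (τ - u)) (Ioc 0 τ) := by
  have h := (((intervalIntegrable_iff_integrableOn_Ioc_of_le hτ).2 hk).comp_sub_left τ).symm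
  rwa [sub_self, sub_zero, intervalIntegrable_iff_integrableOn_Ioc_of_le hτ] at h

theorem setIntegral_Ioc_comp_sub_left (k : ℝ → ℝ) {τ : ℝ} (hτ : 0 ≤ τ) :
    ∫ u in Ioc 0 τ, k (τ - u) = ∫ u in Ioc 0 τ, k u := by
  have h := intervalIntegral.integral_comp_sub_left k τ (a := 0) (b := τ)
  rwa [sub_self, sub_zero, intervalIntegral.integral_of_le hτ,
    intervalIntegral.integral_of_le hτ] at h

theorem contDiff_taylorPoly (f : ℝ → ℝ) (n : ℕ) {m : WithTop ℕ∞} :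
    ContDiff ℝ m (taylorPoly f n) := by
  unfold taylorPoly; fun_prop

theorem iteratedDeriv_taylorPoly (f : ℝ → ℝ) (n j : ℕ) (x : ℝ) :
    iteratedDeriv j (taylorPoly f n) x =
      ∑ i ∈ Finset.range n, iteratedDeriv i f 0 / i ! * iteratedDeriv j (· ^ i) x := by
  have : taylorPoly f n = fun x => ∑ i ∈ Finset.range n, iteratedDeriv i f 0 / i ! * x ^ i := by
    ext x; unfold taylorPoly; congr! 1 with i; ring
  rw [this, iteratedDeriv_fun_sum (fun i _ => by fun_prop)]
  refine Finset.sum_congr rfl fun i _ => ?_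
  exact iteratedDeriv_const_mul _ (by fun_prop)

theorem iteratedDeriv_taylorPoly_zero (f : ℝ → ℝ) {n j : ℕ} (hj : j < n) :
    iteratedDeriv j (taylorPoly f n) 0 = iteratedDeriv j f 0 := by
  rw [iteratedDeriv_taylorPoly, Finset.sum_eq_single j]
  · rw [iteratedDeriv_fun_pow_zero, if_pos rfl, div_mul_cancel₀ _ (by positivity)]
  · intro i _ hij
    rw [iteratedDeriv_fun_pow_zero, if_neg (Ne.symm hij), Nat.cast_zero, mul_zero]
  · simp [hj]

theorem iteratedDeriv_taylorPoly_self (f : ℝ → ℝ) (n : ℕ) :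
    iteratedDeriv n (taylorPoly f n) = 0 := by
  ext x
  rw [iteratedDeriv_taylorPoly]
  refine Finset.sum_eq_zero fun i hi => ?_
  simp [Nat.descFactorial_eq_zero_iff_lt.2 (Finset.mem_range.1 hi)]

theorem sub_taylorPoly_eq_lconv {f : ℝ → ℝ} {m : ℕ} (hf : ContDiff ℝ (m + 1) f) (t : ℝ) :
    f t - taylorPoly f (m + 1) t = lconv (fun x => x ^ m / m !) (iteratedDeriv (m + 1) f) t := by
  rcases eq_or_ne t 0 with rfl | ht
  · simp [lconv, taylorPoly, Finset.sum_range_succ']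
  have hu : UniqueDiffOn ℝ [[0, t]] := uniqueDiffOn_uIcc ht.symm
  have hD : ∀ j ≤ m + 1, ∀ x ∈ [[0, t]],
      iteratedDerivWithin j f [[0, t]] x = iteratedDeriv j f x := fun j hj x hx =>
    iteratedDerivWithin_eq_iteratedDeriv hu ((hf.of_le (by exact_mod_cast hj)).contDiffAt) hx
  have h := taylor_integral_remainder (hf.contDiffOn (s := [[0, t]]))
  rw [taylor_within_apply] at h
  convert h using 2
  · refine Finset.sum_congr rfl fun j hj => ?_
    rw [hD j (Finset.mem_range.1 hj).le 0 left_mem_uIcc, smul_eq_mul, sub_zero]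
    ring
  · refine intervalIntegral.integral_congr fun u hu => ?_
    simp only [smul_eq_mul, hD (m + 1) le_rfl u hu]

theorem iteratedDeriv_sub_taylorPoly {f : ℝ → ℝ} {n j : ℕ} (hf : ContDiff ℝ n f) (hj : j ≤ n)
    (x : ℝ) : iteratedDeriv j (fun y => f y - taylorPoly f n y) x =
      iteratedDeriv j f x - iteratedDeriv j (taylorPoly f n) x :=
  iteratedDeriv_fun_sub (hf.of_le (by exact_mod_cast hj)).contDiffAt
    (contDiff_taylorPoly f n).contDiffAt

theorem hasDerivAt_integral_comp_sub_mul {G k : ℝ → ℝ} {a b : ℝ} (hG : ContDiff ℝ 1 G)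
    (hk : IntervalIntegrable k volume a b) (x₀ : ℝ) :
    HasDerivAt (fun x => ∫ u in a..b, G (x - u) * k u)
      (∫ u in a..b, deriv G (x₀ - u) * k u) x₀ := by
  obtain ⟨C, hC⟩ := (((isCompact_closedBall x₀ 1).prod isCompact_uIcc).image
    continuous_sub).exists_bound_of_continuousOn (hG.continuous_deriv le_rfl).continuousOn
  have hshift : ∀ {ψ : ℝ → ℝ}, Continuous ψ → ∀ x,
      IntervalIntegrable (fun u => ψ (x - u) * k u) volume a b := fun hψ x =>
    hk.continuousOn_mul (hψ.comp (continuous_sub_left x)).continuousOn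
  refine (intervalIntegral.hasDerivAt_integral_of_dominated_loc_of_deriv_le
    (F' := fun x u => deriv G (x - u) * k u) (bound := fun u => C * ‖k u‖)
    (Metric.closedBall_mem_nhds x₀ one_pos)
    (Eventually.of_forall fun x => (hshift hG.continuous x).def'.aestronglyMeasurable)
    (hshift hG.continuous x₀) (hshift (hG.continuous_deriv le_rfl) x₀).def'.aestronglyMeasurable
    ?_ (hk.norm.const_mul C) ?_).2
  · refine Eventually.of_forall fun u hu x hx => ?_
    rw [norm_mul]
    gcongr
    exact hC _ ⟨(x, u), ⟨hx, uIoc_subset_uIcc hu⟩, rfl⟩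
  · exact Eventually.of_forall fun u _ x _ =>
      ((hG.differentiable one_ne_zero (x - u)).hasDerivAt.comp_sub_const x u).mul_const (k u)

theorem exists_norm_le_mul_norm_of_contDiff_of_map_zero {G : ℝ → ℝ} (hG : ContDiff ℝ 1 G)
    (hG0 : G 0 = 0) :
    ∃ C, 0 ≤ C ∧ ∀ y ∈ Metric.closedBall (0 : ℝ) 1, ‖G y‖ ≤ C * ‖y‖ := by
  obtain ⟨C, hC⟩ := (isCompact_closedBall (0 : ℝ) 1).exists_bound_of_continuousOn
    (hG.continuous_deriv le_rfl).continuousOn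
  refine ⟨C, (norm_nonneg _).trans (hC 0 (Metric.mem_closedBall_self zero_le_one)), fun y hy => ?_⟩
  simpa [hG0] using Convex.norm_image_sub_le_of_norm_deriv_le
    (fun z _ => hG.differentiable one_ne_zero z) hC (convex_closedBall 0 1)
    (Metric.mem_closedBall_self zero_le_one) hy

theorem integral_comp_sub_mul_isLittleO {G k : ℝ → ℝ} {a b s : ℝ} (hG : ContDiff ℝ 1 G)
    (hG0 : G 0 = 0) (hk : IntervalIntegrable k volume a b) (hs : s ∈ Ioo a b) :
    (fun x => ∫ u in s..x, G (x - u) * k u) =o[𝓝 s] fun x => x - s := by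
  obtain ⟨C, hC0, hC⟩ := exists_norm_le_mul_norm_of_contDiff_of_map_zero hG hG0
  have hsab : s ∈ [[a, b]] := Ioo_subset_Icc_self.trans Icc_subset_uIcc hs
  have hK : Tendsto (fun x => C * ∫ u in s..x, ‖k u‖) (𝓝 s) (𝓝 0) := by
    have := ((intervalIntegral.continuousOn_primitive_interval' hk.norm hsab).continuousAt
      (mem_of_superset (Icc_mem_nhds hs.1 hs.2) Icc_subset_uIcc)).tendsto.const_mul C
    simpa using this
  refine IsBigO.trans_isLittleO (g := fun x => (x - s) * (C * ∫ u in s..x, ‖k u‖)) ?_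
    (((isBigO_refl (fun x => x - s) _).mul_isLittleO ((isLittleO_one_iff ℝ).2 hK)).congr_right
      (by simp))
  refine IsBigO.of_bound' ?_
  filter_upwards [Metric.closedBall_mem_nhds s one_pos, Ioo_mem_nhds hs.1 hs.2] with x hx hxab
  have hpt : ∀ u ∈ Ι s x, ‖G (x - u) * k u‖ ≤ C * ‖x - s‖ * ‖k u‖ := by
    intro u hu
    have hxu : ‖x - u‖ ≤ ‖x - s‖ := by
      simpa only [Real.norm_eq_abs] using abs_sub_right_of_mem_uIcc (uIoc_subset_uIcc hu)
    rw [norm_mul]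
    gcongr
    calc ‖G (x - u)‖ ≤ C * ‖x - u‖ :=
          hC _ (mem_closedBall_zero_iff.2 (hxu.trans (mem_closedBall_iff_norm.1 hx)))
      _ ≤ C * ‖x - s‖ := by gcongr
  have hkx : IntervalIntegrable k volume s x :=
    hk.mono_set (uIcc_subset_uIcc hsab (Ioo_subset_Icc_self.trans Icc_subset_uIcc hxab))
  have := intervalIntegral.norm_integral_le_abs_of_norm_le (μ := volume)
    ((ae_restrict_iff' measurableSet_uIoc).2 (Eventually.of_forall hpt)) (hkx.norm.const_mul _)
  rw [intervalIntegral.integral_const_mul] at this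
  refine this.trans (le_of_eq ?_)
  simp only [Real.norm_eq_abs, abs_mul, abs_abs]
  ring

theorem hasDerivAt_lconv {G k : ℝ → ℝ} {b s : ℝ} (hG : ContDiff ℝ 1 G) (hG0 : G 0 = 0)
    (hk : IntegrableOn k (Ioc 0 b)) (hs : s ∈ Ioo 0 b) :
    HasDerivAt (lconv G k) (lconv (deriv G) k s) s := by
  have hk' : IntervalIntegrable k volume 0 b :=
    (intervalIntegrable_iff_integrableOn_Ioc_of_le (hs.1.le.trans hs.2.le)).2 hk
  have hint : ∀ x, ∀ c ∈ [[0, b]], ∀ d ∈ [[0, b]],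
      IntervalIntegrable (fun u => G (x - u) * k u) volume c d := fun x c hc d hd =>
    (hk'.mono_set (uIcc_subset_uIcc hc hd)).continuousOn_mul
      (hG.continuous.comp (continuous_sub_left x)).continuousOn
  have hsb : s ∈ [[0, b]] := Ioo_subset_Icc_self.trans Icc_subset_uIcc hs
  have hmoving : HasDerivAt (fun x => ∫ u in s..x, G (x - u) * k u) 0 s := by
    rw [hasDerivAt_iff_isLittleO]
    simpa using integral_comp_sub_mul_isLittleO hG hG0 hk' hs
  have hsplit : (fun x => (∫ u in 0..s, G (x - u) * k u) + ∫ u in s..x, G (x - u) * k u)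
      =ᶠ[𝓝 s] lconv G k := by
    filter_upwards [Ioo_mem_nhds hs.1 hs.2] with x hx
    exact intervalIntegral.integral_add_adjacent_intervals (hint x 0 left_mem_uIcc s hsb)
      (hint x s hsb x (Ioo_subset_Icc_self.trans Icc_subset_uIcc hx))
  have hfixed := hasDerivAt_integral_comp_sub_mul hG
    (hk'.mono_set (uIcc_subset_uIcc left_mem_uIcc hsb)) s
  rw [← add_zero (lconv (deriv G) k s)]
  exact (hfixed.add hmoving).congr_of_eventuallyEq hsplit.symm

theorem iteratedDeriv_lconv {g k : ℝ → ℝ} {n : ℕ} (hg : ContDiff ℝ n g)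
    (hg0 : ∀ j < n, iteratedDeriv j g 0 = 0) (hk : ∀ b > 0, IntegrableOn k (Ioc 0 b))
    {j : ℕ} (hj : j ≤ n) {s : ℝ} (hs : 0 < s) :
    iteratedDeriv j (lconv g k) s = lconv (iteratedDeriv j g) k s := by
  induction j generalizing s with
  | zero => simp
  | succ j ih =>
    have hjn : j < n := hj
    have hD : ContDiff ℝ 1 (iteratedDeriv j g) := contDiff_one_iff_deriv.2
      ⟨hg.differentiable_iteratedDeriv j (by exact_mod_cast hjn),
        iteratedDeriv_succ (f := g) ▸ hg.continuous_iteratedDeriv (j + 1) (by exact_mod_cast hj)⟩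
    rw [iteratedDeriv_succ, (eventuallyEq_of_mem (Ioi_mem_nhds hs) fun x hx =>
      ih hjn.le hx).deriv_eq, (hasDerivAt_lconv hD (hg0 j hjn) (hk (s + 1) (by linarith))
        ⟨hs, by linarith⟩).deriv, ← iteratedDeriv_succ]

section Assoc

variable {κ k v : ℝ → ℝ} {t : ℝ}

/-- The integrand of `(κ * (k * v))(t)` as a function of `(τ, u)` on the triangle `0 < u ≤ τ`. -/
noncomputable def assocIntegrand (κ k v : ℝ → ℝ) (t : ℝ) : ℝ × ℝ → ℝ :=
  {p : ℝ × ℝ | p.2 ∈ Ioc 0 p.1}.indicator fun p => κ (t - p.1) * (k (p.1 - p.2) * v p.2)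

theorem assocIntegrand_apply (τ u : ℝ) : assocIntegrand κ k v t (τ, u) =
    (Ioc 0 τ).indicator (fun u => κ (t - τ) * (k (τ - u) * v u)) u := rfl

theorem setIntegral_assocIntegrand_left {τ : ℝ} (hτ : τ ∈ Ioc 0 t) :
    ∫ u in Ioc 0 t, assocIntegrand κ k v t (τ, u) = κ (t - τ) * lconv k v τ := by
  simp_rw [assocIntegrand_apply]
  rw [setIntegral_indicator measurableSet_Ioc, inter_eq_right.2 (Ioc_subset_Ioc_right hτ.2),
    integral_const_mul, lconv, intervalIntegral.integral_of_le hτ.1.le]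

theorem setIntegral_assocIntegrand_right {u : ℝ} (hu : u ∈ Ioc 0 t) :
    ∫ τ in Ioc 0 t, assocIntegrand κ k v t (τ, u) = lconv κ k (t - u) * v u := by
  have hslice : (fun τ => assocIntegrand κ k v t (τ, u)) =
      (Ici u).indicator fun τ => κ (t - τ) * k (τ - u) * v u := by
    ext τ
    by_cases h : u ≤ τ
    · simp [assocIntegrand_apply, h, hu.1, mul_assoc]
    · simp [assocIntegrand_apply, h]
  have hIcc : Ioc 0 t ∩ Ici u = Icc u t := by
    ext τ; constructor
    · rintro ⟨⟨-, h₁⟩, h₂⟩; exact ⟨h₂, h₁⟩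
    · rintro ⟨h₁, h₂⟩; exact ⟨⟨hu.1.trans_le h₁, h₂⟩, h₁⟩
  have hshift := intervalIntegral.integral_comp_sub_right (fun σ => κ (t - u - σ) * k σ) u
    (a := u) (b := t)
  simp only [sub_sub_sub_cancel_right, sub_self] at hshift
  rw [hslice, setIntegral_indicator measurableSet_Ici, hIcc, integral_Icc_eq_integral_Ioc,
    ← intervalIntegral.integral_of_le hu.2, intervalIntegral.integral_mul_const, hshift, lconv]

theorem setIntegral_norm_assocIntegrand_le {M : ℝ} (hkt : IntegrableOn k (Ioc 0 t))
    (hM : ∀ x ∈ Icc 0 t, ‖v x‖ ≤ M) {τ : ℝ} (hτ : τ ∈ Ioc 0 t) :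
    ∫ u in Ioc 0 t, ‖assocIntegrand κ k v t (τ, u)‖ ≤
      ‖κ (t - τ)‖ * ((∫ u in Ioc 0 t, ‖k u‖) * M) := by
  have hkτ : IntegrableOn (fun u => k (τ - u)) (Ioc 0 τ) :=
    integrableOn_Ioc_comp_sub_left hτ.1.le (hkt.mono_set (Ioc_subset_Ioc_right hτ.2))
  have hM0 : 0 ≤ M := (norm_nonneg _).trans (hM 0 ⟨le_rfl, hτ.1.le.trans hτ.2⟩)
  simp_rw [assocIntegrand_apply, norm_indicator_eq_indicator_norm]
  rw [setIntegral_indicator measurableSet_Ioc, inter_eq_right.2 (Ioc_subset_Ioc_right hτ.2)]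
  calc ∫ u in Ioc 0 τ, ‖κ (t - τ) * (k (τ - u) * v u)‖
      ≤ ∫ u in Ioc 0 τ, ‖κ (t - τ)‖ * (‖k (τ - u)‖ * M) := by
        refine integral_mono_of_nonneg (Eventually.of_forall fun _ => norm_nonneg _)
          ((hkτ.norm.mul_const M).const_mul _) ?_
        filter_upwards [ae_restrict_mem measurableSet_Ioc] with u hu
        rw [norm_mul, norm_mul]
        gcongr
        exact hM u ⟨hu.1.le, hu.2.trans hτ.2⟩
    _ = ‖κ (t - τ)‖ * ((∫ u in Ioc 0 τ, ‖k u‖) * M) := by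
        rw [integral_const_mul, integral_mul_const,
          setIntegral_Ioc_comp_sub_left (fun u => ‖k u‖) hτ.1.le]
    _ ≤ ‖κ (t - τ)‖ * ((∫ u in Ioc 0 t, ‖k u‖) * M) := by
        refine mul_le_mul_of_nonneg_left (mul_le_mul_of_nonneg_right ?_ hM0) (norm_nonneg _)
        exact setIntegral_mono_set hkt.norm (Eventually.of_forall fun _ => norm_nonneg _)
          (Ioc_subset_Ioc_right hτ.2).eventuallyLE

theorem integrable_assocIntegrand (ht : 0 ≤ t) (hκ : StronglyMeasurable κ)
    (hk : StronglyMeasurable k) (hκt : IntegrableOn κ (Ioc 0 t)) (hkt : IntegrableOn k (Ioc 0 t))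
    (hv : Continuous v) :
    Integrable (assocIntegrand κ k v t)
      ((volume.restrict (Ioc 0 t)).prod (volume.restrict (Ioc 0 t))) := by
  obtain ⟨M, hM⟩ := (isCompact_Icc (a := 0) (b := t)).exists_bound_of_continuousOn hv.continuousOn
  have hmeas : StronglyMeasurable (assocIntegrand κ k v t) := by
    refine StronglyMeasurable.indicator ?_ ?_
    · exact (hκ.comp_measurable (by fun_prop)).mul ((hk.comp_measurable (by fun_prop)).mul
        (hv.stronglyMeasurable.comp_measurable (by fun_prop)))
    · exact (measurableSet_lt measurable_const measurable_snd).inter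
        (measurableSet_le measurable_snd measurable_fst)
  rw [integrable_prod_iff hmeas.aestronglyMeasurable]
  constructor
  · filter_upwards [ae_restrict_mem measurableSet_Ioc] with τ hτ
    have hkτ : IntegrableOn (fun u => k (τ - u)) (Ioc 0 τ) :=
      integrableOn_Ioc_comp_sub_left hτ.1.le (hkt.mono_set (Ioc_subset_Ioc_right hτ.2))
    have hF : IntegrableOn (fun u => κ (t - τ) * (k (τ - u) * v u)) (Ioc 0 τ) :=
      (hkτ.mul_continuousOn_of_subset hv.continuousOn measurableSet_Ioc isCompact_Icc
        Ioc_subset_Icc_self).const_mul _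
    simp_rw [assocIntegrand_apply]
    exact (hF.integrable_indicator measurableSet_Ioc).restrict
  · refine Integrable.mono' ((integrableOn_Ioc_comp_sub_left ht hκt).norm.mul_const
      ((∫ u in Ioc 0 t, ‖k u‖) * M)) hmeas.norm.integral_prod_right'.aestronglyMeasurable ?_
    filter_upwards [ae_restrict_mem measurableSet_Ioc] with τ hτ
    rw [Real.norm_of_nonneg (integral_nonneg fun _ => norm_nonneg _)]
    exact setIntegral_norm_assocIntegrand_le hkt hM hτ

theorem lconv_assoc_of_stronglyMeasurable (ht : 0 ≤ t) (hκ : StronglyMeasurable κ)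
    (hk : StronglyMeasurable k) (hκt : IntegrableOn κ (Ioc 0 t)) (hkt : IntegrableOn k (Ioc 0 t))
    (hv : Continuous v) : lconv κ (lconv k v) t = lconv (lconv κ k) v t := by
  have hswap := integral_integral_swap (f := fun τ u => assocIntegrand κ k v t (τ, u))
    (integrable_assocIntegrand ht hκ hk hκt hkt hv)
  rw [setIntegral_congr_fun measurableSet_Ioc fun τ hτ =>
      setIntegral_assocIntegrand_left (κ := κ) (k := k) (v := v) hτ,
    setIntegral_congr_fun measurableSet_Ioc fun u hu =>
      setIntegral_assocIntegrand_right (κ := κ) (k := k) (v := v) hu] at hswap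
  rw [lconv, intervalIntegral.integral_of_le ht, hswap, lconv, intervalIntegral.integral_of_le ht]

theorem lconv_assoc (ht : 0 ≤ t) (hκt : IntegrableOn κ (Ioc 0 t))
    (hkt : IntegrableOn k (Ioc 0 t)) (hv : Continuous v) :
    lconv κ (lconv k v) t = lconv (lconv κ k) v t := by
  -- Fubini needs measurable kernels, while `lconv` only sees `κ` and `k` a.e. on `(0, t]`.
  set κ' := hκt.aestronglyMeasurable.mk κ
  set k' := hkt.aestronglyMeasurable.mk k
  have hκκ' : κ =ᵐ[volume.restrict (Ioc 0 t)] κ' := hκt.aestronglyMeasurable.ae_eq_mk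
  have hkk' : k =ᵐ[volume.restrict (Ioc 0 t)] k' := hkt.aestronglyMeasurable.ae_eq_mk
  have hk_sub : ∀ s ∈ Ioc 0 t, k =ᵐ[volume.restrict (Ioc 0 s)] k' := fun s hs =>
    ae_restrict_of_ae_restrict_of_subset (Ioc_subset_Ioc_right hs.2) hkk'
  have hκ_sub : ∀ s ∈ Ioc 0 t, κ =ᵐ[volume.restrict (Ioc 0 s)] κ' := fun s hs =>
    ae_restrict_of_ae_restrict_of_subset (Ioc_subset_Ioc_right hs.2) hκκ'
  calc lconv κ (lconv k v) t = lconv κ' (lconv k' v) t := by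
        rw [lconv_congr_ae_left ht hκκ']
        exact lconv_congr_right ht fun s hs => lconv_congr_ae_left hs.1.le (hk_sub s hs)
    _ = lconv (lconv κ' k') v t :=
        lconv_assoc_of_stronglyMeasurable ht hκt.aestronglyMeasurable.stronglyMeasurable_mk
          hkt.aestronglyMeasurable.stronglyMeasurable_mk (hκt.congr_fun_ae hκκ')
          (hkt.congr_fun_ae hkk') hv
    _ = lconv (lconv κ k) v t := by
        refine lconv_congr_left ht fun s hs => ?_
        rw [lconv_congr_ae_left hs.1.le (hκ_sub s hs).symm,
          lconv_congr_ae_right hs.1.le (hk_sub s hs).symm]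

end Assoc

theorem gfc_arbitrary_order_second_fundamental_general (n : ℕ) (hn : 1 ≤ n) (κ k f : ℝ → ℝ)
    (hκint : ∀ T > (0:ℝ), IntegrableOn κ (Ioc (0:ℝ) T))
    (hkint : ∀ T > (0:ℝ), IntegrableOn k (Ioc (0:ℝ) T))
    (hSonine : ∀ t > (0:ℝ), lconv κ k t = t ^ (n - 1) / (Nat.factorial (n - 1) : ℝ))
    (hf : ContDiff ℝ n f) :
    ∀ t > (0:ℝ),
      lconv κ (fun τ => iteratedDeriv n
          (fun s => ∫ u in (0:ℝ)..s, k (s - u) * (f u - taylorPoly f n u)) τ) t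
        = f t - taylorPoly f n t := by
  intro t ht
  obtain ⟨m, rfl⟩ : ∃ m, n = m + 1 := ⟨n - 1, by omega⟩
  set g := fun x => f x - taylorPoly f (m + 1) x
  have hg0 : ∀ j < m + 1, iteratedDeriv j g 0 = 0 := fun j hj => by
    rw [iteratedDeriv_sub_taylorPoly hf hj.le, iteratedDeriv_taylorPoly_zero f hj, sub_self]
  have hCaputo : EqOn (iteratedDeriv (m + 1) (lconv k g)) (lconv k (iteratedDeriv (m + 1) f))
      (Ioc 0 t) := fun τ hτ => by
    rw [funext (lconv_comm k g), iteratedDeriv_lconv (hf.sub (contDiff_taylorPoly f _)) hg0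
      hkint le_rfl hτ.1, lconv_comm]
    refine lconv_congr_right hτ.1.le fun x _ => ?_
    rw [iteratedDeriv_sub_taylorPoly hf le_rfl, iteratedDeriv_taylorPoly_self, Pi.zero_apply,
      sub_zero]
  calc lconv κ (iteratedDeriv (m + 1) (lconv k g)) t
      = lconv κ (lconv k (iteratedDeriv (m + 1) f)) t := lconv_congr_right ht.le hCaputo
    _ = lconv (lconv κ k) (iteratedDeriv (m + 1) f) t :=
        lconv_assoc ht.le (hκint t ht) (hkint t ht) (hf.continuous_iteratedDeriv _ le_rfl)
    _ = lconv (fun x => x ^ m / m !) (iteratedDeriv (m + 1) f) t :=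
        lconv_congr_left ht.le fun s hs => by simpa using hSonine s hs.1
    _ = f t - taylorPoly f (m + 1) t := (sub_taylorPoly_eq_lconv hf t).symm

/-- 2nd Fundamental Theorem of general FC of arbitrary order: for kernels with
    `(κ * k)(t) = t^{n-1}/(n-1)!` and sufficiently regular `f` (with `f⁽ⁿ⁾` locally
    integrable), `I_{(κ)} (∗D_{(k)} f) (t) = f(t) - ∑_{j<n} f⁽ʲ⁾(0) tʲ/j!`, where
    `∗D_{(k)} f = dⁿ/dtⁿ (k * (f - taylorPoly f n))`. -/
theorem gfc_arbitrary_order_second_fundamental (n : ℕ) (hn : 1 ≤ n) (κ k f : ℝ → ℝ)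
    (hκint : ∀ T > (0:ℝ), IntegrableOn κ (Ioc (0:ℝ) T))
    (hkint : ∀ T > (0:ℝ), IntegrableOn k (Ioc (0:ℝ) T))
    (hSonine : ∀ t > (0:ℝ), lconv κ k t = t ^ (n - 1) / (Nat.factorial (n - 1) : ℝ))
    (hf : ContDiff ℝ n f)
    (hfn : ∀ T > (0:ℝ), IntegrableOn (iteratedDeriv n f) (Ioc (0:ℝ) T)) :
    ∀ t > (0:ℝ),
      lconv κ (fun τ => iteratedDeriv n
          (fun s => ∫ u in (0:ℝ)..s, k (s - u) * (f u - taylorPoly f n u)) τ) t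
        = f t - taylorPoly f n t :=
  gfc_arbitrary_order_second_fundamental_general n hn κ k f hκint hkint hSonine hf
end
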